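/- arXiv:2007.02743 — 4 statements merged into one kernel-verified Lean document; each statement's English description precedes it below -/
import Mathlib

section
/- Let 𝕜 be a commutative ring, G a finite group, and n ≥ 1. For every G-partition (P,g) of type (l;k), the map Φ(P,g) : V^{⊗k} → V^{⊗l} is a homomorphism of 𝕜[G_n]-modules; moreover Φ(P,g) = Φ(P,h) whenever (P,g) ∼ (P,h). -/
/-!
Statement 8: for every `G`-partition `(P, g)` of type `(l; k)`, the map
`Φ(P, g) : V^{⊗k} → V^{⊗l}` is a homomorphism of `𝕜[G_n]`-modules (it is `𝕜`-linear by
construction and commutes with the action of every `γ ∈ G_n`), and `Φ(P, g) = Φ(P, h)`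
whenever `(P, g) ∼ (P, h)`.  Tensor powers of `V` are realized as free `𝕜`-modules on
tuples of basis vectors of `V`, and set partitions are encoded as `Setoid`s.
-/

namespace GPC

variable (G : Type*) [Group G]

def wreathAut (n : ℕ) : Equiv.Perm (Fin n) →* MulAut (Fin n → G) where
  toFun π :=
    { toFun := fun g => g ∘ ⇑π⁻¹
      invFun := fun g => g ∘ ⇑π
      left_inv := fun g => by funext i; simp
      right_inv := fun g => by funext i; simp
      map_mul' := fun g h => rfl }
  map_one' := by ext g i; simp
  map_mul' := fun π σ => by ext g i; simp

/-- The wreath product `G_n = Gⁿ ⋊ S_n`. -/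
abbrev Wr (n : ℕ) := (Fin n → G) ⋊[wreathAut G n] Equiv.Perm (Fin n)

variable {G}

/-- Equivalence of `G`-partitions with the same underlying partition `P`
(a set partition is encoded as a `Setoid`, whose classes are the parts):
`(P, g) ∼ (P, g')` iff for every part there is `t ∈ G` with `g' = t * g` on that part. -/
def LabelEquiv {X : Type*} (P : Setoid X) (g g' : X → G) : Prop :=
  ∀ a : X, ∃ t : G, ∀ b : X, P a b → g' b = t * g b

/-- The number of parts of a set partition (encoded as a `Setoid`). -/
noncomputable def numParts {X : Type*} (P : Setoid X) : ℕ := Nat.card (Quotient P)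

variable (G) in
/-- The image of the basis vector `g e_i` of `V` under the action of `γ ∈ G_n`:
`(h π) · (g e_i) = h_{π i} g e_{π i}`. -/
def actBasis (n : ℕ) (γ : Wr G n) (p : G × Fin n) : G × Fin n :=
  (γ.left (γ.right p.2) * p.1, γ.right p.2)

variable (𝕜 : Type*) [CommRing 𝕜] (G) (n : ℕ)

/-- The diagonal action of `γ ∈ G_n` on `V^{⊗k}`, realized on the standard basis
of `V^{⊗k}` given by `k`-tuples of basis vectors of `V`. -/
noncomputable def dAct (k : ℕ) (γ : Wr G n) :
    ((Fin k → G × Fin n) →₀ 𝕜) →ₗ[𝕜] ((Fin k → G × Fin n) →₀ 𝕜) :=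
  Finsupp.lmapDomain 𝕜 𝕜 (fun v j => actBasis G n γ (v j))

variable [Fintype G]

open scoped Classical in
/-- The matrix-entry condition defining `Φ(P, g)`: the entry at `(w, v)` is `1`
iff for all `a, b` in the same part of `P` the indices agree and
`h_a g_a⁻¹ = h_b g_b⁻¹`, where `(h, i)` is read off from `v` on the bottom row
and from `w` on the top row. -/
def phiCond {k l : ℕ} (P : Setoid (Fin k ⊕ Fin l)) (g : Fin k ⊕ Fin l → G)
    (v : Fin k → G × Fin n) (w : Fin l → G × Fin n) : Prop :=
  ∀ a b : Fin k ⊕ Fin l, P a b →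
    (Sum.elim v w a).2 = (Sum.elim v w b).2
      ∧ (Sum.elim v w a).1 * (g a)⁻¹ = (Sum.elim v w b).1 * (g b)⁻¹

open scoped Classical in
/-- The map `Φ(P, g) : V^{⊗k} → V^{⊗l}` attached to a `G`-partition `(P, g)` of
type `(l; k)`, defined by its matrix entries on the standard bases. -/
noncomputable def Phi {k l : ℕ} (P : Setoid (Fin k ⊕ Fin l)) (g : Fin k ⊕ Fin l → G) :
    ((Fin k → G × Fin n) →₀ 𝕜) →ₗ[𝕜] ((Fin l → G × Fin n) →₀ 𝕜) :=
  Finsupp.lift _ 𝕜 _ fun v => ∑ w : Fin l → G × Fin n,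
    if phiCond G n P g v w then Finsupp.single w (1 : 𝕜) else 0

end GPC

/-!
The entry of `Φ(P, g)` at `(w, v)` only involves, for `a, b` in a common part of `P`, the
relation `i_a = i_b ∧ h_a g_a⁻¹ = h_b g_b⁻¹`. Acting by `γ = (c, π)` applies `π` to both
indices and multiplies `h_a`, `h_b` on the left by the same `c_{π(i_a)}`, while replacing `g`
by `t g` on a part multiplies `g_a⁻¹`, `g_b⁻¹` on the right by the same `t⁻¹`; neither changes
whether the relation holds. So the matrix of `Φ(P, g)` is invariant under `G_n` acting on both
indices, and since `G_n` permutes the basis of `V^{⊗l}`, `Φ(P, g)` commutes with the action.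
-/

open scoped Classical in
theorem Finsupp.lift_ite_single_comp_lmapDomain {R α α' β β' : Type*} [Semiring R]
    [Fintype β] [Fintype β'] (C : α → β → Prop) (C' : α' → β' → Prop) (f : α → α')
    (e : β ≃ β') (hC : ∀ v w, C' (f v) (e w) ↔ C v w) :
    Finsupp.lift _ R _ (fun v => ∑ w, if C' v w then Finsupp.single w (1 : R) else 0)
        ∘ₗ Finsupp.lmapDomain R R f
      = Finsupp.lmapDomain R R e
        ∘ₗ Finsupp.lift _ R _ (fun v => ∑ w, if C v w then Finsupp.single w (1 : R) else 0) := by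
  refine Finsupp.lhom_ext fun v c => ?_
  simp only [LinearMap.comp_apply, Finsupp.lmapDomain_apply, Finsupp.mapDomain_single,
    Finsupp.lift_apply, Finsupp.sum_single_index, zero_smul, Finsupp.mapDomain_smul,
    Finsupp.mapDomain_finsetSum]
  rw [← e.sum_comp]
  simp only [hC, apply_ite (Finsupp.mapDomain e), Finsupp.mapDomain_single,
    Finsupp.mapDomain_zero]

namespace GPC

variable {G : Type*} [Group G] {n : ℕ}

def actBasisEquiv (γ : Wr G n) : G × Fin n ≃ G × Fin n where
  toFun := actBasis G n γ
  invFun := actBasis G n γ⁻¹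
  left_inv p := by simp [actBasis, wreathAut, Equiv.Perm.inv_def]
  right_inv p := by simp [actBasis, wreathAut, Equiv.Perm.inv_def]

theorem actBasis_rel_iff (γ : Wr G n) (p q : G × Fin n) (x y : G) :
    ((actBasis G n γ p).2 = (actBasis G n γ q).2
      ∧ (actBasis G n γ p).1 * x = (actBasis G n γ q).1 * y)
      ↔ (p.2 = q.2 ∧ p.1 * x = q.1 * y) := by
  simp only [actBasis, γ.right.injective.eq_iff, mul_assoc]
  refine and_congr_right fun hpq => ?_
  rw [hpq, mul_right_inj]

theorem phiCond_comp_iff (f : G × Fin n → G × Fin n)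
    (hf : ∀ p q x y, ((f p).2 = (f q).2 ∧ (f p).1 * x = (f q).1 * y)
      ↔ (p.2 = q.2 ∧ p.1 * x = q.1 * y))
    {k l : ℕ} (P : Setoid (Fin k ⊕ Fin l)) (g : Fin k ⊕ Fin l → G)
    (v : Fin k → G × Fin n) (w : Fin l → G × Fin n) :
    phiCond G n P g (fun j => f (v j)) (fun j => f (w j)) ↔ phiCond G n P g v w := by
  have elim_comp :
      ∀ a, Sum.elim (fun j => f (v j)) (fun j => f (w j)) a = f (Sum.elim v w a) := by
    rintro (a | a) <;> rfl
  unfold phiCond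
  simp only [elim_comp, hf]

theorem phiCond_iff_of_labelEquiv {k l : ℕ} {P : Setoid (Fin k ⊕ Fin l)}
    {g h : Fin k ⊕ Fin l → G} (hgh : LabelEquiv P g h)
    (v : Fin k → G × Fin n) (w : Fin l → G × Fin n) :
    phiCond G n P g v w ↔ phiCond G n P h v w := by
  refine forall_congr' fun a => forall_congr' fun b => imp_congr_right fun hab => ?_
  obtain ⟨t, ht⟩ := hgh a
  rw [ht a (P.refl a), ht b hab]
  simp only [mul_inv_rev, ← mul_assoc, mul_left_inj]

variable (𝕜 : Type*) [CommRing 𝕜] [Fintype G]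

theorem Phi_comp_dAct {k l : ℕ} (P : Setoid (Fin k ⊕ Fin l)) (g : Fin k ⊕ Fin l → G)
    (γ : Wr G n) :
    Phi G 𝕜 n P g ∘ₗ dAct G 𝕜 n k γ = dAct G 𝕜 n l γ ∘ₗ Phi G 𝕜 n P g :=
  Finsupp.lift_ite_single_comp_lmapDomain _ _ _ (.piCongrRight fun _ => actBasisEquiv γ)
    (phiCond_comp_iff _ (actBasis_rel_iff γ) P g)

theorem Phi_eq_of_labelEquiv {k l : ℕ} {P : Setoid (Fin k ⊕ Fin l)}
    {g h : Fin k ⊕ Fin l → G} (hgh : LabelEquiv P g h) :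
    Phi G 𝕜 n P g = Phi G 𝕜 n P h := by
  have hcond : phiCond G n P g = phiCond G n P h := by
    ext v w
    exact phiCond_iff_of_labelEquiv hgh v w
  unfold Phi
  rw [hcond]

theorem Phi_equivariant_and_well_defined_general (𝕜 : Type*) [CommRing 𝕜]
    (G : Type*) [Group G] [Fintype G] (n : ℕ) (k l : ℕ)
    (P : Setoid (Fin k ⊕ Fin l)) (g : Fin k ⊕ Fin l → G) :
    -- `Φ(P, g)` is a homomorphism of `𝕜[G_n]`-modules
    (∀ (γ : Wr G n) (x : (Fin k → G × Fin n) →₀ 𝕜),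
      Phi G 𝕜 n P g (dAct G 𝕜 n k γ x) = dAct G 𝕜 n l γ (Phi G 𝕜 n P g x))
    -- `Φ(P, g)` only depends on the equivalence class of `(P, g)`
    ∧ (∀ h : Fin k ⊕ Fin l → G, LabelEquiv P g h → Phi G 𝕜 n P g = Phi G 𝕜 n P h) :=
  ⟨fun γ => LinearMap.congr_fun (Phi_comp_dAct 𝕜 P g γ),
    fun _ hgh => Phi_eq_of_labelEquiv 𝕜 hgh⟩

theorem Phi_equivariant_and_well_defined (𝕜 : Type*) [CommRing 𝕜]
    (G : Type*) [Group G] [Fintype G] (n : ℕ) (hn : 1 ≤ n) (k l : ℕ)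
    (P : Setoid (Fin k ⊕ Fin l)) (g : Fin k ⊕ Fin l → G) :
    -- `Φ(P, g)` is a homomorphism of `𝕜[G_n]`-modules
    (∀ (γ : Wr G n) (x : (Fin k → G × Fin n) →₀ 𝕜),
      Phi G 𝕜 n P g (dAct G 𝕜 n k γ x) = dAct G 𝕜 n l γ (Phi G 𝕜 n P g x))
    -- `Φ(P, g)` only depends on the equivalence class of `(P, g)`
    ∧ (∀ h : Fin k ⊕ Fin l → G, LabelEquiv P g h → Phi G 𝕜 n P g = Phi G 𝕜 n P h) :=
  Phi_equivariant_and_well_defined_general 𝕜 G n k l P g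

end GPC
end

section
/- Let 𝕜 be a commutative ring, G a finite group, and n ≥ 1. Let (P,g) be a G-partition of type (l;k) and (Q,h) a G-partition of type (m;l). If the pair ((Q,h),(P,g)) is compatible, then Φ(Q,h) ∘ Φ(P,g) = (n|G|)^{α(Q,P)} · Φ(Q ⋆ P, h ⋆_{Q,P} g). If no pair of representatives (Q,h') ∼ (Q,h), (P,g') ∼ (P,g) is compatible, then Φ(Q,h) ∘ Φ(P,g) = 0. -/
/-!
Statement 9: composition of the maps `Φ`: if `((Q,h),(P,g))` is compatible then
`Φ(Q,h) ∘ Φ(P,g) = (n|G|)^{α(Q,P)} · Φ(Q ⋆ P, h ⋆_{Q,P} g)`, and if no pair of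
representatives of the equivalence classes is compatible then `Φ(Q,h) ∘ Φ(P,g) = 0`.
-/

namespace GPC

variable (G : Type*) [Group G]

variable {G}

variable (𝕜 : Type*) [CommRing 𝕜] (G) (n : ℕ)

variable [Fintype G]

section Stack

variable {G}
variable {k l m : ℕ}

/-- Embedding of the vertex set of `P` (bottom row `Fin k`, top row `Fin l`)
into the three-row vertex set of the stacked diagram, where the top row of `P`
becomes the middle row. -/
def embBot : Fin k ⊕ Fin l → Fin k ⊕ (Fin l ⊕ Fin m) := Sum.map id Sum.inl

/-- Embedding of the vertex set of `Q` (bottom row `Fin l`, top row `Fin m`)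
into the three-row vertex set of the stacked diagram, where the bottom row of `Q`
becomes the middle row. -/
def embTop : Fin l ⊕ Fin m → Fin k ⊕ (Fin l ⊕ Fin m) := Sum.inr

/-- The partition of the three-row vertex set of `stack(Q, P)` into connected
components: the equivalence relation generated by the parts of `P` and of `Q`. -/
def stackSetoid (P : Setoid (Fin k ⊕ Fin l)) (Q : Setoid (Fin l ⊕ Fin m)) :
    Setoid (Fin k ⊕ (Fin l ⊕ Fin m)) :=
  Relation.EqvGen.setoid (fun x y =>
    (∃ a b, P a b ∧ x = embBot a ∧ y = embBot b)
      ∨ (∃ a b, Q a b ∧ x = embTop a ∧ y = embTop b))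

/-- The composite partition `Q ⋆ P`: bottom and top vertices are in the same
part iff they are connected in `stack(Q, P)`. -/
def starPart (P : Setoid (Fin k ⊕ Fin l)) (Q : Setoid (Fin l ⊕ Fin m)) :
    Setoid (Fin k ⊕ Fin m) :=
  Setoid.comap (Sum.map id Sum.inr) (stackSetoid P Q)

/-- `α(Q, P)`: the number of connected components of `stack(Q, P)` consisting
only of middle vertices. -/
noncomputable def alphaNum (P : Setoid (Fin k ⊕ Fin l)) (Q : Setoid (Fin l ⊕ Fin m)) : ℕ :=
  Nat.card {c : Quotient (stackSetoid P Q) //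
    ∀ x, Quotient.mk (stackSetoid P Q) x = c → ∃ i : Fin l, x = Sum.inr (Sum.inl i)}

/-- The label `g_{i'} h_i⁻¹` of the `i`-th middle vertex of the stacked diagram
`stack((Q, h), (P, g))`. -/
def midLabel (g : Fin k ⊕ Fin l → G) (h : Fin l ⊕ Fin m → G) (i : Fin l) : G :=
  g (Sum.inr i) * (h (Sum.inl i))⁻¹

/-- Compatibility of the pair `((Q, h), (P, g))`: any two middle vertices lying
in the same part of `Q` have equal labels. -/
def Compatible (P : Setoid (Fin k ⊕ Fin l)) (g : Fin k ⊕ Fin l → G)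
    (Q : Setoid (Fin l ⊕ Fin m)) (h : Fin l ⊕ Fin m → G) : Prop :=
  ∀ i j : Fin l, Q (Sum.inl i) (Sum.inl j) → midLabel g h i = midLabel g h j

open scoped Classical in
/-- The labelling `h ⋆_{Q,P} g` of `Q ⋆ P`: bottom vertices keep the labels `g`,
and the top vertex `i'` gets `u * h_{i'}` where `u` is the (for compatible pairs,
common) label of the middle vertices in the same part of `Q` as `i'`
(`u = 1` if there are none). -/
noncomputable def starLabel (g : Fin k ⊕ Fin l → G)
    (Q : Setoid (Fin l ⊕ Fin m)) (h : Fin l ⊕ Fin m → G) :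
    Fin k ⊕ Fin m → G :=
  Sum.elim (fun a => g (Sum.inl a))
    (fun c => (if hc : ∃ j : Fin l, Q (Sum.inl j) (Sum.inr c)
                then midLabel g h hc.choose else 1) * h (Sum.inr c))

end Stack

section CompLemmas

open scoped Classical

variable {G : Type*} [Group G] {k l m : ℕ}
variable (P : Setoid (Fin k ⊕ Fin l)) (g : Fin k ⊕ Fin l → G)
variable (Q : Setoid (Fin l ⊕ Fin m)) (h : Fin l ⊕ Fin m → G)

/-- Uniform `G`-label on the three-row vertex set of the stacked diagram. -/
noncomputable def uLab : Fin k ⊕ (Fin l ⊕ Fin m) → G :=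
  Sum.elim (fun a => g (Sum.inl a))
    (Sum.elim (fun i => g (Sum.inr i)) (fun c => starLabel g Q h (Sum.inr c)))

lemma uLab_embBot (a : Fin k ⊕ Fin l) : uLab g Q h (embBot (m := m) a) = g a := by
  cases a <;> rfl

lemma uLab_mapEmb (a : Fin k ⊕ Fin m) :
    uLab g Q h (Sum.map id Sum.inr a) = starLabel g Q h a := by
  cases a <;> rfl

/-- The "twist" relating the uniform label to `h` on the vertex set of `Q`. -/
noncomputable def tauL : Fin l ⊕ Fin m → G :=
  Sum.elim (fun i => midLabel g h i)
    (fun c => if hc : ∃ j : Fin l, Q (Sum.inl j) (Sum.inr c)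
                then midLabel g h hc.choose else 1)

lemma uLab_embTop (a : Fin l ⊕ Fin m) :
    uLab g Q h (embTop (k := k) a) = tauL g Q h a * h a := by
  cases a with
  | inl i =>
      show g (Sum.inr i) = midLabel g h i * h (Sum.inl i)
      rw [midLabel, inv_mul_cancel_right]
  | inr c => rfl

variable {P g Q h}

lemma tauL_eq_of_rel (compat : Compatible P g Q h) {i : Fin l} {a : Fin l ⊕ Fin m}
    (hia : Q (Sum.inl i) a) : tauL g Q h a = midLabel g h i := by
  cases a with
  | inl j => exact (compat i j hia).symm
  | inr c =>
      have hc : ∃ j : Fin l, Q (Sum.inl j) (Sum.inr c) := ⟨i, hia⟩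
      show (if hc' : ∃ j : Fin l, Q (Sum.inl j) (Sum.inr c)
              then midLabel g h hc'.choose else 1) = midLabel g h i
      rw [dif_pos hc]
      exact (compat i hc.choose (Q.trans hia (Q.symm hc.choose_spec))).symm

lemma tauL_const (compat : Compatible P g Q h) {a b : Fin l ⊕ Fin m} (hab : Q a b) :
    tauL g Q h a = tauL g Q h b := by
  cases a with
  | inl i => rw [tauL_eq_of_rel compat hab]; rfl
  | inr c =>
      cases b with
      | inl j =>
          rw [tauL_eq_of_rel compat (Q.symm hab)]; rfl
      | inr c' =>
          by_cases hc : ∃ j : Fin l, Q (Sum.inl j) (Sum.inr c)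
          · obtain ⟨j, hj⟩ := hc
            rw [tauL_eq_of_rel compat hj, tauL_eq_of_rel compat (Q.trans hj hab)]
          · have hc' : ¬ ∃ j : Fin l, Q (Sum.inl j) (Sum.inr c') := by
              rintro ⟨j, hj⟩; exact hc ⟨j, Q.trans hj (Q.symm hab)⟩
            show (if hx : ∃ j : Fin l, Q (Sum.inl j) (Sum.inr c)
                    then midLabel g h hx.choose else 1)
               = (if hx : ∃ j : Fin l, Q (Sum.inl j) (Sum.inr c')
                    then midLabel g h hx.choose else 1)
            rw [dif_neg hc, dif_neg hc']

variable {α : Type*}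

/-- Combined labelling of the three-row vertex set by basis vectors. -/
def allLab (v : Fin k → α) (u : Fin m → α) (w : Fin l → α) :
    Fin k ⊕ (Fin l ⊕ Fin m) → α := Sum.elim v (Sum.elim w u)

lemma allLab_embBot (v : Fin k → α) (u : Fin m → α) (w : Fin l → α) (a : Fin k ⊕ Fin l) :
    allLab v u w (embBot (m := m) a) = Sum.elim v w a := by cases a <;> rfl

lemma allLab_embTop (v : Fin k → α) (u : Fin m → α) (w : Fin l → α) (a : Fin l ⊕ Fin m) :
    allLab v u w (embTop (k := k) a) = Sum.elim w u a := rfl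

lemma allLab_mapEmb (v : Fin k → α) (u : Fin m → α) (w : Fin l → α) (a : Fin k ⊕ Fin m) :
    allLab v u w (Sum.map id Sum.inr a) = Sum.elim v u a := by cases a <;> rfl

variable (P g Q h) in
/-- The normalized-value condition defining valid middle labellings. -/
def IsValid {n : ℕ} (v : Fin k → G × Fin n) (u : Fin m → G × Fin n)
    (w : Fin l → G × Fin n) : Prop :=
  ∀ x y, stackSetoid P Q x y →
    (allLab v u w x).2 = (allLab v u w y).2 ∧
    (allLab v u w x).1 * (uLab g Q h x)⁻¹ = (allLab v u w y).1 * (uLab g Q h y)⁻¹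

variable [Fintype G] {n : ℕ}

lemma isValid_iff (compat : Compatible P g Q h)
    (v : Fin k → G × Fin n) (u : Fin m → G × Fin n) (w : Fin l → G × Fin n) :
    IsValid P g Q h v u w ↔ phiCond G n P g v w ∧ phiCond G n Q h w u := by
  constructor
  · intro hw
    refine ⟨fun a b hab => ?_, fun a b hab => ?_⟩
    · have H := hw (embBot a) (embBot b)
        (Relation.EqvGen.rel _ _ (Or.inl ⟨a, b, hab, rfl, rfl⟩))
      rw [allLab_embBot, allLab_embBot, uLab_embBot, uLab_embBot] at H
      exact H
    · have H := hw (embTop a) (embTop b)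
        (Relation.EqvGen.rel _ _ (Or.inr ⟨a, b, hab, rfl, rfl⟩))
      rw [allLab_embTop, allLab_embTop, uLab_embTop, uLab_embTop] at H
      refine ⟨H.1, ?_⟩
      have h2 := H.2
      rw [tauL_const compat hab, mul_inv_rev, mul_inv_rev,
        ← mul_assoc, ← mul_assoc] at h2
      exact mul_right_cancel h2
  · rintro ⟨hp, hq⟩ x y hxy
    replace hxy : Relation.EqvGen _ x y := hxy
    induction hxy with
    | rel x y hr =>
        rcases hr with ⟨a, b, hab, rfl, rfl⟩ | ⟨a, b, hab, rfl, rfl⟩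
        · have H := hp a b hab
          rw [allLab_embBot, allLab_embBot, uLab_embBot, uLab_embBot]
          exact H
        · have H := hq a b hab
          refine ⟨?_, ?_⟩
          · rw [allLab_embTop, allLab_embTop]; exact H.1
          · rw [allLab_embTop, allLab_embTop, uLab_embTop, uLab_embTop,
              tauL_const compat hab, mul_inv_rev, mul_inv_rev,
              ← mul_assoc, ← mul_assoc, H.2]
    | refl x => exact ⟨rfl, rfl⟩
    | symm x y _ ih => exact ⟨ih.1.symm, ih.2.symm⟩
    | trans x y z _ _ ih₁ ih₂ => exact ⟨ih₁.1.trans ih₂.1, ih₁.2.trans ih₂.2⟩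

lemma isValid_star {v : Fin k → G × Fin n} {u : Fin m → G × Fin n} {w : Fin l → G × Fin n}
    (hw : IsValid P g Q h v u w) :
    phiCond G n (starPart P Q) (starLabel g Q h) v u := by
  intro a b hab
  have H := hw (Sum.map id Sum.inr a) (Sum.map id Sum.inr b) hab
  rw [allLab_mapEmb, allLab_mapEmb, uLab_mapEmb, uLab_mapEmb] at H
  exact H

variable (P Q) in
/-- A component of the stacked diagram consisting only of middle vertices. -/
def PureC (c : Quotient (stackSetoid P Q)) : Prop :=
  ∀ x, Quotient.mk (stackSetoid P Q) x = c → ∃ i : Fin l, x = Sum.inr (Sum.inl i)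

lemma not_pureC_exists {c : Quotient (stackSetoid P Q)} (hc : ¬ PureC P Q c) :
    ∃ a : Fin k ⊕ Fin m, Quotient.mk (stackSetoid P Q) (Sum.map id Sum.inr a) = c := by
  rw [PureC] at hc
  push_neg at hc
  obtain ⟨x, hx, hnx⟩ := hc
  cases x with
  | inl a => exact ⟨Sum.inl a, hx⟩
  | inr xc =>
      cases xc with
      | inl i =>
          exact (hnx i rfl).elim
      | inr cc => exact ⟨Sum.inr cc, hx⟩

variable (P g Q h) in
noncomputable def sigC (v : Fin k → G × Fin n) (u : Fin m → G × Fin n)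
    (f : {c : Quotient (stackSetoid P Q) // PureC P Q c} → G × Fin n)
    (c : Quotient (stackSetoid P Q)) : G × Fin n :=
  if hc : PureC P Q c then f ⟨c, hc⟩
  else ((Sum.elim v u (not_pureC_exists hc).choose).1
          * (starLabel g Q h (not_pureC_exists hc).choose)⁻¹,
        (Sum.elim v u (not_pureC_exists hc).choose).2)

variable (P g Q h) in
noncomputable def wOf (v : Fin k → G × Fin n) (u : Fin m → G × Fin n)
    (f : {c : Quotient (stackSetoid P Q) // PureC P Q c} → G × Fin n) :
    Fin l → G × Fin n := fun j =>
  ((sigC P g Q h v u f (Quotient.mk _ (Sum.inr (Sum.inl j)))).1 * g (Sum.inr j),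
   (sigC P g Q h v u f (Quotient.mk _ (Sum.inr (Sum.inl j)))).2)

lemma not_pureC_of_nonmid (a : Fin k ⊕ Fin m) :
    ¬ PureC P Q (Quotient.mk (stackSetoid P Q) (Sum.map id Sum.inr a)) := by
  intro hp
  obtain ⟨i, hi⟩ := hp _ rfl
  cases a <;> simp [Sum.map] at hi

lemma sigC_nonmid {v : Fin k → G × Fin n} {u : Fin m → G × Fin n}
    (hstar : phiCond G n (starPart P Q) (starLabel g Q h) v u)
    (f : {c : Quotient (stackSetoid P Q) // PureC P Q c} → G × Fin n) (a : Fin k ⊕ Fin m) :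
    (sigC P g Q h v u f (Quotient.mk (stackSetoid P Q) (Sum.map id Sum.inr a))).1
        = (Sum.elim v u a).1 * (starLabel g Q h a)⁻¹ ∧
    (sigC P g Q h v u f (Quotient.mk (stackSetoid P Q) (Sum.map id Sum.inr a))).2
        = (Sum.elim v u a).2 := by
  have hnp := not_pureC_of_nonmid (P := P) (Q := Q) a
  have hspec := (not_pureC_exists hnp).choose_spec
  set a0 := (not_pureC_exists hnp).choose with ha0
  have hrel : stackSetoid P Q (Sum.map id Sum.inr a) (Sum.map id Sum.inr a0) :=
    Quotient.exact hspec.symm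
  have H := hstar a a0 hrel
  rw [sigC, dif_neg hnp]
  exact ⟨by rw [← H.2], by rw [← H.1]⟩

lemma allLab_wOf {v : Fin k → G × Fin n} {u : Fin m → G × Fin n}
    (hstar : phiCond G n (starPart P Q) (starLabel g Q h) v u)
    (f : {c : Quotient (stackSetoid P Q) // PureC P Q c} → G × Fin n)
    (x : Fin k ⊕ (Fin l ⊕ Fin m)) :
    (allLab v u (wOf P g Q h v u f) x).1 * (uLab g Q h x)⁻¹
        = (sigC P g Q h v u f (Quotient.mk (stackSetoid P Q) x)).1 ∧
    (allLab v u (wOf P g Q h v u f) x).2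
        = (sigC P g Q h v u f (Quotient.mk (stackSetoid P Q) x)).2 := by
  rcases x with a | (i | c)
  · have := sigC_nonmid hstar f (Sum.inl a)
    exact ⟨this.1.symm, this.2.symm⟩
  · refine ⟨?_, rfl⟩
    show (wOf P g Q h v u f i).1 * (g (Sum.inr i))⁻¹ = _
    rw [wOf, mul_inv_cancel_right]
  · have := sigC_nonmid hstar f (Sum.inr c)
    exact ⟨this.1.symm, this.2.symm⟩

lemma isValid_wOf {v : Fin k → G × Fin n} {u : Fin m → G × Fin n}
    (hstar : phiCond G n (starPart P Q) (starLabel g Q h) v u)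
    (f : {c : Quotient (stackSetoid P Q) // PureC P Q c} → G × Fin n) :
    IsValid P g Q h v u (wOf P g Q h v u f) := by
  intro x y hxy
  have hq : Quotient.mk (stackSetoid P Q) x = Quotient.mk (stackSetoid P Q) y :=
    Quotient.sound hxy
  obtain ⟨h1x, h2x⟩ := allLab_wOf hstar f x
  obtain ⟨h1y, h2y⟩ := allLab_wOf hstar f y
  refine ⟨h2x.trans ?_, h1x.trans ?_⟩
  · rw [hq, h2y]
  · rw [hq, ← h1y]

lemma pureC_out_mid {c : Quotient (stackSetoid P Q)} (hc : PureC P Q c) :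
    ∃ i : Fin l, c.out = Sum.inr (Sum.inl i) := hc _ (Quotient.out_eq c)

variable (P g Q h) in
noncomputable def validEquiv {v : Fin k → G × Fin n} {u : Fin m → G × Fin n}
    (hstar : phiCond G n (starPart P Q) (starLabel g Q h) v u) :
    {w : Fin l → G × Fin n // IsValid P g Q h v u w} ≃
      ({c : Quotient (stackSetoid P Q) // PureC P Q c} → G × Fin n) where
  toFun w c :=
    ((w.1 (pureC_out_mid c.2).choose).1 * (g (Sum.inr (pureC_out_mid c.2).choose))⁻¹,
     (w.1 (pureC_out_mid c.2).choose).2)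
  invFun f := ⟨wOf P g Q h v u f, isValid_wOf hstar f⟩
  left_inv := by
    rintro ⟨w, hw⟩
    apply Subtype.ext
    funext j
    show ((sigC P g Q h v u _ (Quotient.mk _ (Sum.inr (Sum.inl j)))).1 * g (Sum.inr j),
          (sigC P g Q h v u _ (Quotient.mk _ (Sum.inr (Sum.inl j)))).2) = w j
    set c := Quotient.mk (stackSetoid P Q) (Sum.inr (Sum.inl j)) with hcdef
    by_cases hc : PureC P Q c
    · rw [sigC, dif_pos hc]
      obtain ⟨i, hi⟩ : ∃ i : Fin l, c.out = Sum.inr (Sum.inl i) := pureC_out_mid hc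
      have hmk : Quotient.mk (stackSetoid P Q)
          (Sum.inr (Sum.inl (pureC_out_mid hc).choose)) = c := by
        rw [← (pureC_out_mid hc).choose_spec, Quotient.out_eq]
      have hrel : stackSetoid P Q (Sum.inr (Sum.inl (pureC_out_mid hc).choose))
          (Sum.inr (Sum.inl j)) := Quotient.exact (hmk.trans hcdef)
      have H := hw _ _ hrel
      have H1 : (w (pureC_out_mid hc).choose).1 * (g (Sum.inr (pureC_out_mid hc).choose))⁻¹
          = (w j).1 * (g (Sum.inr j))⁻¹ := H.2
      have H2 : (w (pureC_out_mid hc).choose).2 = (w j).2 := H.1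
      show ((w (pureC_out_mid hc).choose).1 * (g (Sum.inr (pureC_out_mid hc).choose))⁻¹
            * g (Sum.inr j), (w (pureC_out_mid hc).choose).2) = w j
      rw [H1, H2, inv_mul_cancel_right]
    · rw [sigC, dif_neg hc]
      have hspec := (not_pureC_exists hc).choose_spec
      set a0 := (not_pureC_exists hc).choose with ha0
      have hrel : stackSetoid P Q (Sum.map id Sum.inr a0) (Sum.inr (Sum.inl j)) :=
        Quotient.exact (hspec.trans hcdef)
      have H := hw _ _ hrel
      rw [allLab_mapEmb, uLab_mapEmb] at H
      have H1 : (Sum.elim v u a0).1 * (starLabel g Q h a0)⁻¹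
          = (w j).1 * (g (Sum.inr j))⁻¹ := H.2
      have H2 : (Sum.elim v u a0).2 = (w j).2 := H.1
      rw [H1, H2, inv_mul_cancel_right]
  right_inv := by
    intro f
    funext c
    obtain ⟨c, hc⟩ := c
    have hi := (pureC_out_mid hc).choose_spec
    set i := (pureC_out_mid hc).choose with hidef
    have hmk : Quotient.mk (stackSetoid P Q) (Sum.inr (Sum.inl i)) = c := by
      rw [← hi, Quotient.out_eq]
    have hs : sigC P g Q h v u f (Quotient.mk _ (Sum.inr (Sum.inl i))) = f ⟨c, hc⟩ := by
      rw [hmk, sigC, dif_pos hc]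
    show ((sigC P g Q h v u f (Quotient.mk _ (Sum.inr (Sum.inl i)))).1 * g (Sum.inr i)
            * (g (Sum.inr i))⁻¹,
          (sigC P g Q h v u f (Quotient.mk _ (Sum.inr (Sum.inl i)))).2) = f ⟨c, hc⟩
    rw [mul_inv_cancel_right, hs]
  
lemma card_valid {v : Fin k → G × Fin n} {u : Fin m → G × Fin n}
    (hstar : phiCond G n (starPart P Q) (starLabel g Q h) v u) :
    Nat.card {w : Fin l → G × Fin n // IsValid P g Q h v u w}
      = (n * Fintype.card G) ^ alphaNum P Q := by
  rw [Nat.card_congr (validEquiv P g Q h hstar), Nat.card_fun]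
  congr 1
  rw [Nat.card_prod, Nat.card_eq_fintype_card, Nat.card_eq_fintype_card,
    Fintype.card_fin, mul_comm]

end CompLemmas

section Assemble

open scoped Classical

variable {𝕜 : Type*} [CommRing 𝕜] {G : Type*} [Group G] [Fintype G] {n : ℕ}

lemma Phi_single {k l : ℕ} (P : Setoid (Fin k ⊕ Fin l)) (g : Fin k ⊕ Fin l → G)
    (v : Fin k → G × Fin n) :
    Phi G 𝕜 n P g (Finsupp.single v 1)
      = ∑ w : Fin l → G × Fin n,
          if phiCond G n P g v w then Finsupp.single w (1 : 𝕜) else 0 := by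
  rw [Phi, Finsupp.lift_apply]
  rw [Finsupp.sum_single_index]
  · rw [one_smul]
  · exact zero_smul 𝕜 _

variable {k l m : ℕ}
variable (P : Setoid (Fin k ⊕ Fin l)) (g : Fin k ⊕ Fin l → G)
variable (Q : Setoid (Fin l ⊕ Fin m)) (h : Fin l ⊕ Fin m → G)

lemma comp_single (v : Fin k → G × Fin n) :
    (Phi G 𝕜 n Q h ∘ₗ Phi G 𝕜 n P g) (Finsupp.single v 1)
      = ∑ u : Fin m → G × Fin n,
          (((Finset.univ.filter fun w : Fin l → G × Fin n =>
              phiCond G n P g v w ∧ phiCond G n Q h w u).card : ℕ) : 𝕜)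
            • Finsupp.single u 1 := by
  rw [LinearMap.comp_apply, Phi_single, map_sum]
  have step : ∀ w : Fin l → G × Fin n,
      Phi G 𝕜 n Q h (if phiCond G n P g v w then Finsupp.single w (1:𝕜) else 0)
        = ∑ u : Fin m → G × Fin n,
            if phiCond G n P g v w ∧ phiCond G n Q h w u
              then Finsupp.single u (1:𝕜) else 0 := by
    intro w
    by_cases hp : phiCond G n P g v w
    · rw [if_pos hp, Phi_single]
      refine Finset.sum_congr rfl fun u _ => ?_
      by_cases hq : phiCond G n Q h w u
      · rw [if_pos hq, if_pos ⟨hp, hq⟩]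
      · rw [if_neg hq, if_neg fun hc => hq hc.2]
    · rw [if_neg hp, map_zero]
      exact (Finset.sum_eq_zero fun u _ => if_neg fun hc => hp hc.1).symm
  rw [Finset.sum_congr rfl fun w _ => step w, Finset.sum_comm]
  refine Finset.sum_congr rfl fun u _ => ?_
  have sm : ∀ w : Fin l → G × Fin n,
      (if phiCond G n P g v w ∧ phiCond G n Q h w u then Finsupp.single u (1:𝕜) else 0)
        = (if phiCond G n P g v w ∧ phiCond G n Q h w u then (1:𝕜) else 0)
            • Finsupp.single u (1:𝕜) := by
    intro w
    by_cases hc : phiCond G n P g v w ∧ phiCond G n Q h w u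
    · rw [if_pos hc, if_pos hc, one_smul]
    · rw [if_neg hc, if_neg hc, zero_smul]
  rw [Finset.sum_congr rfl fun w _ => sm w, ← Finset.sum_smul, Finset.sum_boole]

variable {P g Q h}

lemma filter_card_eq (compat : Compatible P g Q h)
    {v : Fin k → G × Fin n} {u : Fin m → G × Fin n}
    (hstar : phiCond G n (starPart P Q) (starLabel g Q h) v u) :
    (Finset.univ.filter fun w : Fin l → G × Fin n =>
        phiCond G n P g v w ∧ phiCond G n Q h w u).card
      = (n * Fintype.card G) ^ alphaNum P Q := by
  have he : ∀ w ∈ (Finset.univ : Finset (Fin l → G × Fin n)),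
      ((phiCond G n P g v w ∧ phiCond G n Q h w u) ↔ IsValid P g Q h v u w) :=
    fun w _ => (isValid_iff compat v u w).symm
  rw [Finset.filter_congr he, ← Fintype.card_subtype, ← Nat.card_eq_fintype_card]
  exact card_valid hstar

lemma filter_card_zero (compat : Compatible P g Q h)
    {v : Fin k → G × Fin n} {u : Fin m → G × Fin n}
    (hstar : ¬ phiCond G n (starPart P Q) (starLabel g Q h) v u) :
    (Finset.univ.filter fun w : Fin l → G × Fin n =>
        phiCond G n P g v w ∧ phiCond G n Q h w u).card = 0 := by
  rw [Finset.card_eq_zero, Finset.filter_eq_empty_iff]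
  exact fun w _ hc => hstar (isValid_star ((isValid_iff compat v u w).mpr hc))

end Assemble

theorem Phi_comp (𝕜 : Type*) [CommRing 𝕜]
    (G : Type*) [Group G] [Fintype G] (n : ℕ) (hn : 1 ≤ n) (k l m : ℕ)
    (P : Setoid (Fin k ⊕ Fin l)) (g : Fin k ⊕ Fin l → G)
    (Q : Setoid (Fin l ⊕ Fin m)) (h : Fin l ⊕ Fin m → G) :
    -- compatible case
    (Compatible P g Q h →
      Phi G 𝕜 n Q h ∘ₗ Phi G 𝕜 n P g
        = (((n * Fintype.card G) ^ alphaNum P Q : ℕ) : 𝕜)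
            • Phi G 𝕜 n (starPart P Q) (starLabel g Q h))
    -- incompatible case: no compatible pair of representatives exists
    ∧ ((¬ ∃ (g' : Fin k ⊕ Fin l → G) (h' : Fin l ⊕ Fin m → G),
          LabelEquiv P g g' ∧ LabelEquiv Q h h' ∧ Compatible P g' Q h') →
      Phi G 𝕜 n Q h ∘ₗ Phi G 𝕜 n P g = 0) := by
  classical
  constructor
  · intro compat
    have key : ∀ v : Fin k → G × Fin n,
        (Phi G 𝕜 n Q h ∘ₗ Phi G 𝕜 n P g) (Finsupp.single v (1:𝕜))
          = (((n * Fintype.card G) ^ alphaNum P Q : ℕ) : 𝕜)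
              • Phi G 𝕜 n (starPart P Q) (starLabel g Q h) (Finsupp.single v 1) := by
      intro v
      rw [comp_single P g Q h v, Phi_single, Finset.smul_sum]
      refine Finset.sum_congr rfl fun u _ => ?_
      by_cases hstar : phiCond G n (starPart P Q) (starLabel g Q h) v u
      · rw [if_pos hstar, filter_card_eq compat hstar]
      · rw [if_neg hstar, smul_zero, filter_card_zero compat hstar]
        simp
    apply Finsupp.lhom_ext
    intro v b
    have hb : (Finsupp.single v b : (Fin k → G × Fin n) →₀ 𝕜) = b • Finsupp.single v 1 := by
      rw [Finsupp.smul_single, smul_eq_mul, mul_one]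
    rw [hb, map_smul, map_smul, key v, LinearMap.smul_apply]
  · intro hninc
    have hzero : ∀ (v : Fin k → G × Fin n) (w : Fin l → G × Fin n) (u : Fin m → G × Fin n),
        ¬ (phiCond G n P g v w ∧ phiCond G n Q h w u) := by
      rintro v w u ⟨hp, hq⟩
      exact hninc ⟨fun a => (Sum.elim v w a).1, fun a => (Sum.elim w u a).1,
        fun a => ⟨(Sum.elim v w a).1 * (g a)⁻¹, fun b hab => by
          rw [(hp a b hab).2, inv_mul_cancel_right]⟩,
        fun a => ⟨(Sum.elim w u a).1 * (h a)⁻¹, fun b hab => by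
          rw [(hq a b hab).2, inv_mul_cancel_right]⟩,
        fun i j _ => by simp [midLabel]⟩
    apply Finsupp.lhom_ext
    intro v b
    have hb : (Finsupp.single v b : (Fin k → G × Fin n) →₀ 𝕜) = b • Finsupp.single v 1 := by
      rw [Finsupp.smul_single, smul_eq_mul, mul_one]
    have hc0 : ∀ u : Fin m → G × Fin n,
        (Finset.univ.filter fun w : Fin l → G × Fin n =>
          phiCond G n P g v w ∧ phiCond G n Q h w u).card = 0 := fun u => by
      rw [Finset.card_eq_zero, Finset.filter_eq_empty_iff]
      exact fun w _ => hzero v w u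
    rw [hb, map_smul, comp_single P g Q h v]
    simp [hc0]


end GPC
end

section
/- Let 𝕜 be a commutative ring, G a finite group, and n ≥ 1. The group G_n permutes the standard basis B of V^{⊗k}. For a G-partition (P,g) of type (0;k), the set O_{P,g} depends only on the equivalence class [P,g]; the sets O_{[P,g]}, as [P,g] ranges over equivalence classes whose underlying partition P has at most n parts, are pairwise distinct and are exactly the G_n-orbits on B. -/
/-!
Statement 10: the wreath product `G_n` permutes the standard basis `B` of `V^{⊗k}`
(realized as the set of `k`-tuples of basis vectors `g e_i` of `V`); for a `G`-partition
`(P, g)` of type `(0; k)` the set `O_{P,g} ⊆ B` depends only on the equivalence class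
`[P, g]`; and the sets `O_{[P,g]}`, for `[P, g]` with at most `n` parts, are pairwise
distinct and are exactly the `G_n`-orbits on `B`.
-/

namespace GPC

variable (G : Type*) [Group G]

variable {G}

variable (G) in
/-- The action of `γ ∈ G_n` on the standard basis of `V^{⊗k}`, i.e. on `k`-tuples of
basis vectors of `V`. -/
def actTuple (n k : ℕ) (γ : Wr G n) (v : Fin k → G × Fin n) : Fin k → G × Fin n :=
  fun j => actBasis G n γ (v j)

variable (G) in
/-- The set `O_{P,g}` of basis vectors `h_k e_{i_k} ⊗ ⋯ ⊗ h_1 e_{i_1}` such that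
`i_a = i_b` iff `a, b` lie in the same part of `P`, and `h_a g_a⁻¹ = h_b g_b⁻¹`
whenever `a, b` lie in the same part of `P`. -/
def Oset (n k : ℕ) (P : Setoid (Fin k)) (g : Fin k → G) : Set (Fin k → G × Fin n) :=
  {v | (∀ a b : Fin k, (v a).2 = (v b).2 ↔ P a b)
    ∧ ∀ a b : Fin k, P a b → (v a).1 * (g a)⁻¹ = (v b).1 * (g b)⁻¹}

section Aux

variable {n k : ℕ}

/-- If `numParts P ≤ n` there is an injection from the parts to `Fin n`. -/
lemma exists_inj_of_numParts_le (P : Setoid (Fin k)) (h : numParts P ≤ n) :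
    ∃ f : Quotient P → Fin n, Function.Injective f := by
  classical
  have : Finite (Quotient P) := Quotient.finite P
  have : Fintype (Quotient P) := Fintype.ofFinite _
  have hcard : Fintype.card (Quotient P) ≤ Fintype.card (Fin n) := by
    rw [Fintype.card_fin]
    rw [numParts, Nat.card_eq_fintype_card] at h
    exact h
  obtain ⟨f⟩ := Function.Embedding.nonempty_of_card_le hcard
  exact ⟨f, f.injective⟩

/-- The canonical element of `Oset G n k P g` attached to an injection of the parts. -/
lemma std_mem_Oset (P : Setoid (Fin k)) (g : Fin k → G)
    (f : Quotient P → Fin n) (hf : Function.Injective f) :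
    (fun a => (g a, f (Quotient.mk P a))) ∈ Oset G n k P g := by
  constructor
  · intro a b
    constructor
    · intro hab
      exact Quotient.eq''.mp (hf hab)
    · intro hab
      simp only
      exact congrArg f (Quotient.sound hab)
  · intro a b _
    simp

/-- The action preserves `Oset`. -/
lemma act_mem_Oset {P : Setoid (Fin k)} {g : Fin k → G} (γ : Wr G n)
    {v : Fin k → G × Fin n} (hv : v ∈ Oset G n k P g) :
    actTuple G n k γ v ∈ Oset G n k P g := by
  obtain ⟨h1, h2⟩ := hv
  constructor
  · intro a b
    simp only [actTuple, actBasis]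
    rw [(γ.right.injective).eq_iff]
    exact h1 a b
  · intro a b hab
    simp only [actTuple, actBasis]
    have e2 : (v a).2 = (v b).2 := (h1 a b).mpr hab
    rw [e2, mul_assoc, mul_assoc, h2 a b hab]

end Aux

theorem Oset_orbits (G : Type*) [Group G] [Fintype G] (n : ℕ) (hn : 1 ≤ n) (k : ℕ) :
    -- `G_n` acts on (permutes) the standard basis of `V^{⊗k}`
    (∀ v : Fin k → G × Fin n, actTuple G n k 1 v = v)
    ∧ (∀ (γ δ : Wr G n) (v : Fin k → G × Fin n),
        actTuple G n k (γ * δ) v = actTuple G n k γ (actTuple G n k δ v))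
    -- `O_{P,g}` depends only on the equivalence class of `(P, g)`
    ∧ (∀ (P : Setoid (Fin k)) (g h : Fin k → G),
        LabelEquiv P g h → Oset G n k P g = Oset G n k P h)
    -- distinct classes with at most `n` parts give distinct sets
    ∧ (∀ (P : Setoid (Fin k)) (g : Fin k → G) (Q : Setoid (Fin k)) (h : Fin k → G),
        numParts P ≤ n → numParts Q ≤ n → Oset G n k P g = Oset G n k Q h →
          P = Q ∧ LabelEquiv P g h)
    -- each `O_{P,g}` with at most `n` parts is a `G_n`-orbit …
    ∧ (∀ (P : Setoid (Fin k)) (g : Fin k → G), numParts P ≤ n →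
        ∃ v : Fin k → G × Fin n,
          Oset G n k P g = {w | ∃ γ : Wr G n, w = actTuple G n k γ v})
    -- … and every basis vector lies in one of them
    ∧ (∀ v : Fin k → G × Fin n, ∃ (P : Setoid (Fin k)) (g : Fin k → G),
        numParts P ≤ n ∧ v ∈ Oset G n k P g) := by
  classical
  -- the key "label change" lemma
  have label : ∀ (P : Setoid (Fin k)) (g h : Fin k → G),
      LabelEquiv P g h → Oset G n k P g ⊆ Oset G n k P h := by
    intro P g h hgh v hv
    obtain ⟨h1, h2⟩ := hv
    refine ⟨h1, fun a b hab => ?_⟩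
    obtain ⟨t, ht⟩ := hgh a
    rw [ht a (P.refl a), ht b hab, mul_inv_rev, mul_inv_rev, ← mul_assoc, ← mul_assoc,
      h2 a b hab]
  refine ⟨?_, ?_, ?_, ?_, ?_, ?_⟩
  · intro v
    funext j
    simp [actTuple, actBasis]
  · intro γ δ v
    funext j
    simp only [actTuple, actBasis, SemidirectProduct.mul_left, SemidirectProduct.mul_right,
      wreathAut, MonoidHom.coe_mk, OneHom.coe_mk, MulAut.mul_apply]
    simp [mul_assoc]
  · intro P g h hgh
    have hsym : LabelEquiv P h g := by
      intro a
      obtain ⟨t, ht⟩ := hgh a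
      exact ⟨t⁻¹, fun b hb => by rw [ht b hb, inv_mul_cancel_left]⟩
    exact le_antisymm (label P g h hgh) (label P h g hsym)
  · intro P g Q h hP hQ hPQ
    obtain ⟨f, hf⟩ := exists_inj_of_numParts_le P hP
    set v : Fin k → G × Fin n := fun a => (g a, f (Quotient.mk P a)) with hv
    have hvP : v ∈ Oset G n k P g := std_mem_Oset P g f hf
    have hvQ : v ∈ Oset G n k Q h := hPQ ▸ hvP
    have hPQ' : P = Q := by
      refine Setoid.ext fun a b => ?_
      rw [← hvP.1 a b, hvQ.1 a b]
    refine ⟨hPQ', fun a => ?_⟩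
    refine ⟨h a * (g a)⁻¹, fun b hb => ?_⟩
    have h0 := hvQ.2 a b (hPQ' ▸ hb)
    -- h0 : g a * (h a)⁻¹ = g b * (h b)⁻¹ (up to defeq)
    have h3 : h a * (g a)⁻¹ = h b * (g b)⁻¹ := by
      have := congrArg (·⁻¹) h0
      simpa [hv, mul_inv_rev] using this
    rw [h3, inv_mul_cancel_right]
  · intro P g hP
    obtain ⟨f, hf⟩ := exists_inj_of_numParts_le P hP
    refine ⟨fun a => (g a, f (Quotient.mk P a)), ?_⟩
    have hvP := std_mem_Oset (n := n) P g f hf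
    ext w
    constructor
    · -- w ∈ Oset → w is in the orbit
      intro hw
      obtain ⟨h1, h2⟩ := hw
      -- the second injection, coming from w
      set f₂ : Quotient P → Fin n :=
        Quotient.lift (fun a => (w a).2) (fun a b hab => (h1 a b).mpr hab) with hf₂def
      have hf₂ : Function.Injective f₂ := by
        intro x y
        induction x using Quotient.inductionOn
        induction y using Quotient.inductionOn
        intro hxy
        exact Quotient.sound ((h1 _ _).mp hxy)
      -- a permutation sending `f q` to `f₂ q`
      set e : {x // x ∈ Set.range f} ≃ {x // x ∈ Set.range f₂} :=
        (Equiv.ofInjective f hf).symm.trans (Equiv.ofInjective f₂ hf₂) with he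
      set π : Equiv.Perm (Fin n) := e.extendSubtype with hπ
      have hπf : ∀ q : Quotient P, π (f q) = f₂ q := by
        intro q
        rw [hπ, e.extendSubtype_apply_of_mem (f q) ⟨q, rfl⟩, he]
        simp only [Equiv.trans_apply]
        rw [Equiv.ofInjective_symm_apply]
        simp [Equiv.ofInjective_apply]
      -- the group-coordinates
      set hfun : Fin n → G := fun i =>
        if hi : ∃ a : Fin k, (w a).2 = i then (w hi.choose).1 * (g hi.choose)⁻¹ else 1
        with hhfun
      refine ⟨⟨hfun, π⟩, ?_⟩
      funext a
      have hπa : π (f (Quotient.mk P a)) = (w a).2 := hπf (Quotient.mk P a)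
      have hex : ∃ b : Fin k, (w b).2 = (w a).2 := ⟨a, rfl⟩
      have hch : (w hex.choose).1 * (g hex.choose)⁻¹ = (w a).1 * (g a)⁻¹ := by
        have hP' : P hex.choose a := (h1 _ _).mp hex.choose_spec
        exact h2 _ _ hP'
      have hfv : hfun ((w a).2) = (w a).1 * (g a)⁻¹ := by
        rw [hhfun]
        simp only [dif_pos hex]
        exact hch
      show w a = actBasis G n ⟨hfun, π⟩ ((fun a => (g a, f (Quotient.mk P a))) a)
      show w a = (hfun (π (f (Quotient.mk P a))) * g a, π (f (Quotient.mk P a)))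
      rw [hπa, hfv, inv_mul_cancel_right]
    · rintro ⟨γ, rfl⟩
      exact act_mem_Oset γ hvP
  · intro v
    refine ⟨Setoid.ker (fun a => (v a).2), fun a => (v a).1, ?_, ?_, ?_⟩
    · have : Nat.card (Quotient (Setoid.ker (fun a : Fin k => (v a).2)))
          = Nat.card (Set.range (fun a : Fin k => (v a).2)) :=
        Nat.card_congr (Setoid.quotientKerEquivRange _)
      rw [numParts, this]
      have hle : Nat.card (Set.range (fun a : Fin k => (v a).2)) ≤ Nat.card (Fin n) :=
        Nat.card_le_card_of_injective _ Subtype.val_injective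
      rw [Nat.card_eq_fintype_card, Nat.card_eq_fintype_card, Fintype.card_fin] at hle
      rw [Nat.card_eq_fintype_card]
      exact hle
    · intro a b
      exact Iff.rfl
    · intro a b hab
      simp

end GPC
end

section
/- Let 𝕜 be a commutative ring, G a finite group, and n ≥ 1. For a G-partition (P,g) of type (l;k), let F(P,g) : V^{⊗k} → V^{⊗l} be the 𝕜-linear map whose matrix entry between basis vectors equals 1 if (i_a = i_b if and only if a, b lie in the same part of P) and (h_a g_a^{−1} = h_b g_b^{−1} for all a, b in the same part of P), and 0 otherwise; F(P,g) depends only on [P,g]. Then the maps F(P,g), as [P,g] ranges over the equivalence classes of G-partitions of type (l;k) whose underlying partition has at most n parts, form a basis of the 𝕜-module Hom_{𝕜[G_n]}(V^{⊗k}, V^{⊗l}). In particular, Hom_{𝕜[G_n]}(V^{⊗k}, V^{⊗l}) is spanned by the maps Φ(P,g) over all G-partitions (P,g) of type (l;k). -/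
/-!
A tuple of basis vectors `u = (h_a e_{i_a})_{a ∈ X}` of `V` determines a `G`-partition: the
partition of `X` by equal indices `i_a`, labelled by `h`. Two tuples lie in the same `G_n`-orbit
exactly when they determine equivalent `G`-partitions, and the tuples with at most `n` distinct
indices realize every class with at most `n` parts. So `F(P,g)` is the indicator matrix of one
`G_n`-orbit on pairs of tuples, and equivariant maps, whose matrix entries are `G_n`-invariant,
are exactly the combinations of these indicators. Finally `Φ(P,g)` is the sum of the `F(Q,g')`
over the classes `[Q,g']` coarser than `[P,g]`, a unitriangular system with respect to the
number of parts, which can be inverted by induction.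
-/

namespace GPC

variable (G : Type*) [Group G]

variable {G}

variable (𝕜 : Type*) [CommRing 𝕜] (G) (n : ℕ)

variable [Fintype G]

open scoped Classical in
/-- The condition defining `F(P, g)`: indices agree *iff* in the same part of `P`,
and labels `h_a g_a⁻¹` agree on parts of `P`. -/
def exactCond {k l : ℕ} (P : Setoid (Fin k ⊕ Fin l)) (g : Fin k ⊕ Fin l → G)
    (v : Fin k → G × Fin n) (w : Fin l → G × Fin n) : Prop :=
  (∀ a b : Fin k ⊕ Fin l, (Sum.elim v w a).2 = (Sum.elim v w b).2 ↔ P a b)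
    ∧ ∀ a b : Fin k ⊕ Fin l, P a b →
        (Sum.elim v w a).1 * (g a)⁻¹ = (Sum.elim v w b).1 * (g b)⁻¹

open scoped Classical in
/-- The map `F(P, g) : V^{⊗k} → V^{⊗l}`. -/
noncomputable def FFun {k l : ℕ} (P : Setoid (Fin k ⊕ Fin l)) (g : Fin k ⊕ Fin l → G) :
    ((Fin k → G × Fin n) →₀ 𝕜) →ₗ[𝕜] ((Fin l → G × Fin n) →₀ 𝕜) :=
  Finsupp.lift _ 𝕜 _ fun v => ∑ w : Fin l → G × Fin n,
    if exactCond G n P g v w then Finsupp.single w (1 : 𝕜) else 0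

/-- The `𝕜`-module `Hom_{𝕜[G_n]}(V^{⊗k}, V^{⊗l})` of homomorphisms of
`𝕜[G_n]`-modules: the `G_n`-equivariant `𝕜`-linear maps. -/
def equivariantHom (k l : ℕ) :
    Submodule 𝕜 (((Fin k → G × Fin n) →₀ 𝕜) →ₗ[𝕜] ((Fin l → G × Fin n) →₀ 𝕜)) where
  carrier := {f | ∀ (γ : Wr G n) (x : (Fin k → G × Fin n) →₀ 𝕜),
    f (dAct G 𝕜 n k γ x) = dAct G 𝕜 n l γ (f x)}
  add_mem' := by
    intro f g hf hg γ x
    simp [hf γ x, hg γ x]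
  zero_mem' := by intro γ x; simp
  smul_mem' := by
    intro c f hf γ x
    simp [hf γ x]

section Action

variable {G : Type*} [Group G] {n : ℕ}

instance : MulAction (Wr G n) (G × Fin n) where
  smul := actBasis G n
  one_smul p := show actBasis G n 1 p = p by simp [actBasis]
  mul_smul γ γ' p := show actBasis G n (γ * γ') p = actBasis G n γ (actBasis G n γ' p) by
    simp [actBasis, SemidirectProduct.mul_left, SemidirectProduct.mul_right, wreathAut, mul_assoc]

theorem smul_def (γ : Wr G n) (p : G × Fin n) :
    γ • p = (γ.left (γ.right p.2) * p.1, γ.right p.2) := rfl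

variable {𝕜 : Type*} [CommRing 𝕜]

theorem dAct_single {m : ℕ} (γ : Wr G n) (v : Fin m → G × Fin n) (c : 𝕜) :
    dAct G 𝕜 n m γ (Finsupp.single v c) = Finsupp.single (γ • v) c :=
  Finsupp.mapDomain_single

theorem dAct_apply_smul {m : ℕ} (γ : Wr G n) (x : (Fin m → G × Fin n) →₀ 𝕜)
    (w : Fin m → G × Fin n) : dAct G 𝕜 n m γ x (γ • w) = x w :=
  Finsupp.mapDomain_apply (MulAction.injective γ) x w

end Action

section PartitionTypes

variable {X G I : Type*} [Group G]

-- `exactCond` and `phiCond`, read on the single tuple `u = Sum.elim v w`.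
def FitsExactly (P : Setoid X) (g : X → G) (u : X → G × I) : Prop :=
  (∀ a b, (u a).2 = (u b).2 ↔ P a b) ∧ ∀ a b, P a b → (u a).1 * (g a)⁻¹ = (u b).1 * (g b)⁻¹

def Fits (P : Setoid X) (g : X → G) (u : X → G × I) : Prop :=
  ∀ a b, P a b → (u a).2 = (u b).2 ∧ (u a).1 * (g a)⁻¹ = (u b).1 * (g b)⁻¹

/-- `[Q, g']` is coarser than `[P, g]`: every part of `P` lies in a part of `Q`, on which
`g'` agrees with `g` up to a left translation. -/
def Refines (P : Setoid X) (g : X → G) (Q : Setoid X) (g' : X → G) : Prop :=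
  P ≤ Q ∧ ∀ a b, P a b → g' a * (g a)⁻¹ = g' b * (g b)⁻¹

theorem Refines.refl (P : Setoid X) (g : X → G) : Refines P g P g :=
  ⟨le_rfl, fun _ _ _ => by simp⟩

theorem LabelEquiv.of_refines {P Q : Setoid X} {g g' : X → G} (h : Refines P g Q g') :
    LabelEquiv P g g' := fun a =>
  ⟨g' a * (g a)⁻¹, fun b hab => by rw [h.2 a b hab]; group⟩

theorem fitsExactly_congr {P : Setoid X} {g g' : X → G} (h : LabelEquiv P g g')
    (u : X → G × I) : FitsExactly P g u ↔ FitsExactly P g' u := by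
  refine and_congr Iff.rfl (forall₃_congr fun a b hab => ?_)
  obtain ⟨t, ht⟩ := h a
  rw [ht a (P.refl a), ht b hab, mul_inv_rev, mul_inv_rev, ← mul_assoc, ← mul_assoc,
    mul_left_inj]

theorem FitsExactly.unique {P P' : Setoid X} {g g' : X → G} {u : X → G × I}
    (h : FitsExactly P g u) (h' : FitsExactly P' g' u) : P = P' ∧ LabelEquiv P g g' := by
  obtain rfl : P = P' := Setoid.ext fun a b => (h.1 a b).symm.trans (h'.1 a b)
  refine ⟨rfl, fun a => ⟨((u a).1 * (g' a)⁻¹)⁻¹ * ((u a).1 * (g a)⁻¹), fun b hab => ?_⟩⟩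
  rw [h.2 a b hab, h'.2 a b hab]
  group

theorem fitsExactly_ker (u : X → G × I) :
    FitsExactly (Setoid.ker fun a => (u a).2) (fun a => (u a).1) u :=
  ⟨fun _ _ => Setoid.ker_def.symm, fun _ _ _ => by simp⟩

theorem numParts_ker_le [Finite I] (f : X → I) : numParts (Setoid.ker f) ≤ Nat.card I :=
  (Nat.card_congr (Setoid.quotientKerEquivRange f)).trans_le (Finite.card_subtype_le _)

theorem exists_fitsExactly [Finite X] [Finite I] {P : Setoid X} (hP : numParts P ≤ Nat.card I)
    (g : X → G) : ∃ u : X → G × I, FitsExactly P g u := by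
  have := Fintype.ofFinite (Quotient P)
  have := Fintype.ofFinite I
  obtain ⟨ρ⟩ : Nonempty (Quotient P ↪ I) := Function.Embedding.nonempty_of_card_le <| by
    simpa [numParts, Nat.card_eq_fintype_card] using hP
  exact ⟨fun a => (g a, ρ ⟦a⟧), fun a b => ρ.injective.eq_iff.trans Quotient.eq,
    fun a b _ => by simp⟩

theorem fits_iff_refines {P Q : Setoid X} {g g' : X → G} {u : X → G × I}
    (h : FitsExactly Q g' u) : Fits P g u ↔ Refines P g Q g' := by
  constructor
  · intro hu
    refine ⟨fun a b hab => (h.1 a b).mp (hu a b hab).1, fun a b hab => ?_⟩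
    calc g' a * (g a)⁻¹ = ((u a).1 * (g' a)⁻¹)⁻¹ * ((u a).1 * (g a)⁻¹) := by group
      _ = ((u b).1 * (g' b)⁻¹)⁻¹ * ((u b).1 * (g b)⁻¹) := by
        rw [h.2 a b ((h.1 a b).mp (hu a b hab).1), (hu a b hab).2]
      _ = g' b * (g b)⁻¹ := by group
  · intro hr a b hab
    have hQ := hr.1 hab
    refine ⟨(h.1 a b).mpr hQ, ?_⟩
    calc (u a).1 * (g a)⁻¹ = ((u a).1 * (g' a)⁻¹) * (g' a * (g a)⁻¹) := by group
      _ = ((u b).1 * (g' b)⁻¹) * (g' b * (g b)⁻¹) := by rw [h.2 a b hQ, hr.2 a b hab]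
      _ = (u b).1 * (g b)⁻¹ := by group

theorem numParts_lt_of_lt [Finite X] {P Q : Setoid X} (h : P < Q) : numParts Q < numParts P := by
  have := Fintype.ofFinite (Quotient P)
  have := Fintype.ofFinite (Quotient Q)
  let m : Quotient P → Quotient Q := Setoid.map_of_le h.le
  have hm : Function.Surjective m := Quotient.ind fun b => ⟨⟦b⟧, rfl⟩
  have hm' : ¬ Function.Injective m := fun hinj =>
    h.not_ge fun a b hab => Quotient.exact (hinj (Quotient.sound hab : m ⟦a⟧ = m ⟦b⟧))
  simpa [numParts, Nat.card_eq_fintype_card] using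
    Fintype.card_lt_of_surjective_not_injective m hm hm'

end PartitionTypes

section Orbits

variable {X G : Type*} [Group G] {n : ℕ} {P : Setoid X} {g : X → G}

theorem FitsExactly.smul {u : X → G × Fin n} (h : FitsExactly P g u) (γ : Wr G n) :
    FitsExactly P g (γ • u) := by
  refine ⟨fun a b => ?_, fun a b hab => ?_⟩
  · simpa [smul_def] using h.1 a b
  · simp only [Pi.smul_apply, smul_def, (h.1 a b).mpr hab, mul_assoc, mul_right_inj]
    exact h.2 a b hab

theorem fitsExactly_smul_iff {u : X → G × Fin n} (γ : Wr G n) :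
    FitsExactly P g (γ • u) ↔ FitsExactly P g u :=
  ⟨fun h => by simpa using h.smul γ⁻¹, fun h => h.smul γ⟩

theorem Fits.smul {u : X → G × Fin n} (h : Fits P g u) (γ : Wr G n) : Fits P g (γ • u) := by
  intro a b hab
  obtain ⟨hi, hl⟩ := h a b hab
  simp only [Pi.smul_apply, smul_def, hi, mul_assoc, mul_right_inj, true_and]
  exact hl

theorem fits_smul_iff {u : X → G × Fin n} (γ : Wr G n) : Fits P g (γ • u) ↔ Fits P g u :=
  ⟨fun h => by simpa using h.smul γ⁻¹, fun h => h.smul γ⟩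

theorem FitsExactly.exists_smul_eq {u u' : X → G × Fin n} (hu : FitsExactly P g u)
    (hu' : FitsExactly P g u') : ∃ γ : Wr G n, γ • u = u' := by
  let f : Quotient P → Fin n := Quotient.lift (fun a => (u a).2) fun a b => (hu.1 a b).mpr
  let f' : Quotient P → Fin n := Quotient.lift (fun a => (u' a).2) fun a b => (hu'.1 a b).mpr
  have hf : Function.Injective f := fun x y =>
    Quotient.inductionOn₂ x y fun a b h => Quotient.sound ((hu.1 a b).mp h)
  have hf' : Function.Injective f' := fun x y =>
    Quotient.inductionOn₂ x y fun a b h => Quotient.sound ((hu'.1 a b).mp h)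
  have := Finite.of_injective f hf
  obtain ⟨π, hπ⟩ := Equiv.Perm.exists_extending_pair f f' hf hf'
  -- `γ` must carry the label `(u' a).1 * (u a).1⁻¹` at the index `(u' a).2`; this is well
  -- defined because on each part both `u` and `u'` are left translates of `g`.
  have hlabel : Function.FactorsThrough (fun a => (u' a).1 * (u a).1⁻¹) (fun a => (u' a).2) := by
    intro a b hab
    have hP := (hu'.1 a b).mp hab
    calc (u' a).1 * (u a).1⁻¹ = ((u' a).1 * (g a)⁻¹) * ((u a).1 * (g a)⁻¹)⁻¹ := by group
      _ = ((u' b).1 * (g b)⁻¹) * ((u b).1 * (g b)⁻¹)⁻¹ := by rw [hu.2 a b hP, hu'.2 a b hP]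
      _ = (u' b).1 * (u b).1⁻¹ := by group
  refine ⟨⟨Function.extend (fun a => (u' a).2) (fun a => (u' a).1 * (u a).1⁻¹) 1, π⟩,
    funext fun a => ?_⟩
  have hπa : π (u a).2 = (u' a).2 := hπ ⟦a⟧
  simp [smul_def, hπa, hlabel.extend_apply]

end Orbits

section Entries

variable {𝕜 α : Type*} [CommRing 𝕜] {k l : ℕ}

/-- The matrix entry of a map `(α^k →₀ 𝕜) → (α^l →₀ 𝕜)` at the column `u ∘ inl` and the row
`u ∘ inr`; a single tuple on `Fin k ⊕ Fin l` indexes both, as for `G`-partitions. -/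
noncomputable def entry (u : Fin k ⊕ Fin l → α) :
    (((Fin k → α) →₀ 𝕜) →ₗ[𝕜] ((Fin l → α) →₀ 𝕜)) →ₗ[𝕜] 𝕜 :=
  Finsupp.lapply (u ∘ Sum.inr) ∘ₗ LinearMap.applyₗ (Finsupp.single (u ∘ Sum.inl) 1)

theorem entry_apply (u : Fin k ⊕ Fin l → α) (f : ((Fin k → α) →₀ 𝕜) →ₗ[𝕜] ((Fin l → α) →₀ 𝕜)) :
    entry u f = f (Finsupp.single (u ∘ Sum.inl) 1) (u ∘ Sum.inr) := rfl

theorem linearMap_ext_entry {f f' : ((Fin k → α) →₀ 𝕜) →ₗ[𝕜] ((Fin l → α) →₀ 𝕜)}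
    (h : ∀ u, entry u f = entry u f') : f = f' :=
  Finsupp.lhom_ext' fun v => LinearMap.ext_ring <| Finsupp.ext fun w => h (Sum.elim v w)

open scoped Classical in
theorem entry_lift_indicator [Fintype α] (R : (Fin k → α) → (Fin l → α) → Prop)
    (u : Fin k ⊕ Fin l → α) :
    entry u (Finsupp.lift _ 𝕜 _ fun v => ∑ w, if R v w then Finsupp.single w (1 : 𝕜) else 0)
      = if R (u ∘ Sum.inl) (u ∘ Sum.inr) then 1 else 0 := by
  rw [entry_apply, Finsupp.lift_apply, Finsupp.sum_single_index (by simp), one_smul,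
    Finsupp.finsetSum_apply, Finset.sum_eq_single (u ∘ Sum.inr)
      (fun w _ hw => by split_ifs <;> simp [hw]) (by simp)]
  split_ifs <;> simp

end Entries

section Equivariance

variable {𝕜 G : Type*} [CommRing 𝕜] [Group G] {n k l : ℕ}

theorem mem_equivariantHom_iff
    {f : ((Fin k → G × Fin n) →₀ 𝕜) →ₗ[𝕜] ((Fin l → G × Fin n) →₀ 𝕜)} :
    f ∈ equivariantHom G 𝕜 n k l ↔ ∀ (γ : Wr G n) u, entry (γ • u) f = entry u f := by
  constructor
  · intro hf γ u
    have := congr($(hf γ (Finsupp.single (u ∘ Sum.inl) 1)) (γ • (u ∘ Sum.inr)))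
    rwa [dAct_single, dAct_apply_smul] at this
  · intro h γ x
    suffices f ∘ₗ dAct G 𝕜 n k γ = dAct G 𝕜 n l γ ∘ₗ f from LinearMap.congr_fun this x
    refine linearMap_ext_entry fun u => ?_
    set u' := Sum.elim (u ∘ Sum.inl) (γ⁻¹ • (u ∘ Sum.inr))
    calc entry u (f ∘ₗ dAct G 𝕜 n k γ) = entry (γ • u') f := by
          simp only [entry_apply, LinearMap.comp_apply, dAct_single]
          exact congr_arg (f _) (smul_inv_smul γ (u ∘ Sum.inr)).symm
      _ = entry u' f := h γ u'
      _ = entry u (dAct G 𝕜 n l γ ∘ₗ f) := by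
          rw [entry_apply, entry_apply, LinearMap.comp_apply,
            ← smul_inv_smul γ (u ∘ Sum.inr), dAct_apply_smul]
          rfl

variable [Fintype G]

open scoped Classical

theorem entry_FFun (P : Setoid (Fin k ⊕ Fin l)) (g : Fin k ⊕ Fin l → G)
    (u : Fin k ⊕ Fin l → G × Fin n) :
    entry u (FFun G 𝕜 n P g) = if FitsExactly P g u then 1 else 0 := by
  rw [FFun, entry_lift_indicator]
  refine if_congr ?_ rfl rfl
  conv_rhs => rw [← Sum.elim_comp_inl_inr u]
  rfl

theorem entry_Phi (P : Setoid (Fin k ⊕ Fin l)) (g : Fin k ⊕ Fin l → G)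
    (u : Fin k ⊕ Fin l → G × Fin n) :
    entry u (Phi G 𝕜 n P g) = if Fits P g u then 1 else 0 := by
  rw [Phi, entry_lift_indicator]
  refine if_congr ?_ rfl rfl
  conv_rhs => rw [← Sum.elim_comp_inl_inr u]
  rfl

theorem FFun_mem_equivariantHom (P : Setoid (Fin k ⊕ Fin l)) (g : Fin k ⊕ Fin l → G) :
    FFun G 𝕜 n P g ∈ equivariantHom G 𝕜 n k l :=
  mem_equivariantHom_iff.2 fun γ u => by
    simp only [entry_FFun, fitsExactly_smul_iff]

theorem Phi_mem_equivariantHom (P : Setoid (Fin k ⊕ Fin l)) (g : Fin k ⊕ Fin l → G) :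
    Phi G 𝕜 n P g ∈ equivariantHom G 𝕜 n k l :=
  mem_equivariantHom_iff.2 fun γ u => by
    simp only [entry_Phi, fits_smul_iff]

theorem FFun_eq_of_labelEquiv {P : Setoid (Fin k ⊕ Fin l)} {g g' : Fin k ⊕ Fin l → G}
    (h : LabelEquiv P g g') : FFun G 𝕜 n P g = FFun G 𝕜 n P g' :=
  linearMap_ext_entry fun u => by
    simp only [entry_FFun, fitsExactly_congr h]

end Equivariance

section Transversal

open Finset Submodule

variable {𝕜 G : Type*} [CommRing 𝕜] [Group G] {n k l : ℕ} {ι : Type*}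
  {F : ι → Setoid (Fin k ⊕ Fin l) × (Fin k ⊕ Fin l → G)}

theorem eq_of_fitsExactly
    (hinj : ∀ i j, (F i).1 = (F j).1 → LabelEquiv (F i).1 (F i).2 (F j).2 → i = j) {i j : ι}
    {u : Fin k ⊕ Fin l → G × Fin n} (hi : FitsExactly (F i).1 (F i).2 u)
    (hj : FitsExactly (F j).1 (F j).2 u) : i = j :=
  hinj i j (hi.unique hj).1 (hi.unique hj).2

theorem exists_fitsExactly_transversal
    (hcover : ∀ (P : Setoid (Fin k ⊕ Fin l)) (g : Fin k ⊕ Fin l → G), numParts P ≤ n →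
      ∃ i, (F i).1 = P ∧ LabelEquiv P (F i).2 g)
    (u : Fin k ⊕ Fin l → G × Fin n) : ∃ i, FitsExactly (F i).1 (F i).2 u := by
  obtain ⟨i, hP, hg⟩ := hcover _ (fun a => (u a).1) <| by
    simpa using numParts_ker_le fun a => (u a).2
  exact ⟨i, hP ▸ (fitsExactly_congr hg u).2 (fitsExactly_ker u)⟩

theorem exists_fitsExactly_of_numParts_le (hparts : ∀ i, numParts (F i).1 ≤ n) (i : ι) :
    ∃ u : Fin k ⊕ Fin l → G × Fin n, FitsExactly (F i).1 (F i).2 u :=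
  exists_fitsExactly (by simpa using hparts i) (F i).2

variable [Fintype G]

theorem finite_of_transversal (hparts : ∀ i, numParts (F i).1 ≤ n)
    (hinj : ∀ i j, (F i).1 = (F j).1 → LabelEquiv (F i).1 (F i).2 (F j).2 → i = j) :
    Finite ι := by
  choose u hu using exists_fitsExactly_of_numParts_le hparts
  exact Finite.of_injective u fun i j h => eq_of_fitsExactly hinj (hu i) (h ▸ hu j)

open scoped Classical in
theorem entry_sum_smul_FFun
    (hinj : ∀ i j, (F i).1 = (F j).1 → LabelEquiv (F i).1 (F i).2 (F j).2 → i = j)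
    (s : Finset ι) (c : ι → 𝕜) {j : ι} {u : Fin k ⊕ Fin l → G × Fin n}
    (hj : FitsExactly (F j).1 (F j).2 u) :
    entry u (∑ i ∈ s, c i • FFun G 𝕜 n (F i).1 (F i).2) = if j ∈ s then c j else 0 := by
  have hfits : ∀ i, FitsExactly (F i).1 (F i).2 u ↔ i = j :=
    fun i => ⟨fun hi => eq_of_fitsExactly hinj hi hj, fun h => h ▸ hj⟩
  simp only [map_sum, map_smul, entry_FFun, hfits, smul_eq_mul, mul_ite, mul_one, mul_zero]
  exact sum_ite_eq' s j c

theorem linearIndependent_FFun (hparts : ∀ i, numParts (F i).1 ≤ n)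
    (hinj : ∀ i j, (F i).1 = (F j).1 → LabelEquiv (F i).1 (F i).2 (F j).2 → i = j) :
    LinearIndependent 𝕜 fun i => FFun G 𝕜 n (F i).1 (F i).2 := by
  refine (linearIndependent_iff' (R := 𝕜)
    (M := ((Fin k → G × Fin n) →₀ 𝕜) →ₗ[𝕜] ((Fin l → G × Fin n) →₀ 𝕜))).2 fun s c hc i hi => ?_
  obtain ⟨u, hu⟩ := exists_fitsExactly_of_numParts_le hparts i
  have h := congr_arg (entry u) hc
  rwa [entry_sum_smul_FFun hinj s c hu, if_pos hi, map_zero] at h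

theorem mem_span_FFun [Fintype ι] (hparts : ∀ i, numParts (F i).1 ≤ n)
    (hcover : ∀ (P : Setoid (Fin k ⊕ Fin l)) (g : Fin k ⊕ Fin l → G), numParts P ≤ n →
      ∃ i, (F i).1 = P ∧ LabelEquiv P (F i).2 g)
    (hinj : ∀ i j, (F i).1 = (F j).1 → LabelEquiv (F i).1 (F i).2 (F j).2 → i = j)
    {f : ((Fin k → G × Fin n) →₀ 𝕜) →ₗ[𝕜] ((Fin l → G × Fin n) →₀ 𝕜)}
    (hf : f ∈ equivariantHom G 𝕜 n k l) :
    f ∈ span 𝕜 (Set.range fun i => FFun G 𝕜 n (F i).1 (F i).2) := by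
  choose rep hrep using exists_fitsExactly_of_numParts_le hparts
  have hexpand : f = ∑ i, entry (rep i) f • FFun G 𝕜 n (F i).1 (F i).2 := by
    refine linearMap_ext_entry fun u => ?_
    obtain ⟨i, hi⟩ := exists_fitsExactly_transversal hcover u
    obtain ⟨γ, rfl⟩ := (hrep i).exists_smul_eq hi
    rw [entry_sum_smul_FFun hinj _ _ hi, if_pos (mem_univ i), mem_equivariantHom_iff.1 hf]
  rw [hexpand]
  exact sum_mem fun i _ => smul_mem _ _ (subset_span ⟨i, rfl⟩)

open scoped Classical in
theorem Phi_eq_sum_FFun [Fintype ι]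
    (hcover : ∀ (P : Setoid (Fin k ⊕ Fin l)) (g : Fin k ⊕ Fin l → G), numParts P ≤ n →
      ∃ i, (F i).1 = P ∧ LabelEquiv P (F i).2 g)
    (hinj : ∀ i j, (F i).1 = (F j).1 → LabelEquiv (F i).1 (F i).2 (F j).2 → i = j)
    (P : Setoid (Fin k ⊕ Fin l)) (g : Fin k ⊕ Fin l → G) :
    Phi G 𝕜 n P g = ∑ j ∈ univ.filter (fun j => Refines P g (F j).1 (F j).2),
      FFun G 𝕜 n (F j).1 (F j).2 := by
  refine linearMap_ext_entry fun u => ?_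
  obtain ⟨j, hj⟩ := exists_fitsExactly_transversal hcover u
  simpa [entry_Phi, fits_iff_refines hj] using (entry_sum_smul_FFun hinj
    (univ.filter fun j => Refines P g (F j).1 (F j).2) (fun _ => (1 : 𝕜)) hj).symm

open scoped Classical in
theorem FFun_mem_span_Phi [Fintype ι]
    (hcover : ∀ (P : Setoid (Fin k ⊕ Fin l)) (g : Fin k ⊕ Fin l → G), numParts P ≤ n →
      ∃ i, (F i).1 = P ∧ LabelEquiv P (F i).2 g)
    (hinj : ∀ i j, (F i).1 = (F j).1 → LabelEquiv (F i).1 (F i).2 (F j).2 → i = j) (i : ι) :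
    FFun G 𝕜 n (F i).1 (F i).2 ∈
      span 𝕜 {f | ∃ (P : Setoid (Fin k ⊕ Fin l)) (g : Fin k ⊕ Fin l → G), f = Phi G 𝕜 n P g} := by
  induction hm : numParts (F i).1 using Nat.strong_induction_on generalizing i with
  | _ m ih =>
  set s := univ.filter fun j => Refines (F i).1 (F i).2 (F j).1 (F j).2
  have hi : i ∈ s := mem_filter.2 ⟨mem_univ i, Refines.refl _ _⟩
  have hsplit : FFun G 𝕜 n (F i).1 (F i).2 + ∑ j ∈ s.erase i, FFun G 𝕜 n (F j).1 (F j).2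
      = Phi G 𝕜 n (F i).1 (F i).2 := by
    rw [Phi_eq_sum_FFun hcover hinj]
    exact add_sum_erase s _ hi
  refine (Submodule.add_mem_iff_left
    (M := ((Fin k → G × Fin n) →₀ 𝕜) →ₗ[𝕜] ((Fin l → G × Fin n) →₀ 𝕜))
    (y := ∑ j ∈ s.erase i, FFun G 𝕜 n (F j).1 (F j).2) _ (Submodule.sum_mem _ fun j hj => ?_)).1 ?_
  · obtain ⟨hji, hr⟩ := by simpa [s] using hj
    have hlt : (F i).1 < (F j).1 :=
      lt_of_le_of_ne hr.1 fun h => hji (hinj i j h (.of_refines hr)).symm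
    exact ih _ (hm ▸ numParts_lt_of_lt hlt) j rfl
  · rw [hsplit]
    exact subset_span ⟨_, _, rfl⟩

end Transversal

theorem FFun_basis_and_Phi_span_general (𝕜 : Type*) [CommRing 𝕜]
    (G : Type*) [Group G] [Fintype G] (n : ℕ) (k l : ℕ)
    (ι : Type*) (F : ι → Setoid (Fin k ⊕ Fin l) × (Fin k ⊕ Fin l → G))
    -- `F` is a transversal of the equivalence classes with at most `n` parts:
    (hparts : ∀ i, numParts (F i).1 ≤ n)
    (hcover : ∀ (P : Setoid (Fin k ⊕ Fin l)) (g : Fin k ⊕ Fin l → G), numParts P ≤ n →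
      ∃ i, (F i).1 = P ∧ LabelEquiv P (F i).2 g)
    (hinj : ∀ i j, (F i).1 = (F j).1 → LabelEquiv (F i).1 (F i).2 (F j).2 → i = j) :
    -- `F(P,g)` depends only on the equivalence class of `(P, g)`
    (∀ (P : Setoid (Fin k ⊕ Fin l)) (g h : Fin k ⊕ Fin l → G),
      LabelEquiv P g h → FFun G 𝕜 n P g = FFun G 𝕜 n P h)
    -- the `F(P,g)` form a basis of `Hom_{𝕜[G_n]}(V^{⊗k}, V^{⊗l})`
    ∧ LinearIndependent 𝕜 (fun i => FFun G 𝕜 n (F i).1 (F i).2)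
    ∧ Submodule.span 𝕜 (Set.range fun i => FFun G 𝕜 n (F i).1 (F i).2)
        = equivariantHom G 𝕜 n k l
    -- in particular, the maps `Φ(P,g)` span `Hom_{𝕜[G_n]}(V^{⊗k}, V^{⊗l})`
    ∧ Submodule.span 𝕜
        {f | ∃ (P : Setoid (Fin k ⊕ Fin l)) (g : Fin k ⊕ Fin l → G), f = Phi G 𝕜 n P g}
        = equivariantHom G 𝕜 n k l := by
  have := finite_of_transversal hparts hinj
  have := Fintype.ofFinite ι
  have hspanF : Submodule.span 𝕜 (Set.range fun i => FFun G 𝕜 n (F i).1 (F i).2)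
      = equivariantHom G 𝕜 n k l :=
    le_antisymm (Submodule.span_le.2 <| Set.range_subset_iff.2 fun i => FFun_mem_equivariantHom _ _)
      fun f hf => mem_span_FFun hparts hcover hinj hf
  refine ⟨fun P g h => FFun_eq_of_labelEquiv, linearIndependent_FFun hparts hinj, hspanF,
    le_antisymm ?_ ?_⟩
  · exact Submodule.span_le.2 fun f ⟨P, g, hf⟩ => hf ▸ Phi_mem_equivariantHom P g
  · exact hspanF ▸ Submodule.span_le.2 (Set.range_subset_iff.2 (FFun_mem_span_Phi hcover hinj))

theorem FFun_basis_and_Phi_span (𝕜 : Type*) [CommRing 𝕜]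
    (G : Type*) [Group G] [Fintype G] (n : ℕ) (hn : 1 ≤ n) (k l : ℕ)
    (ι : Type*) (F : ι → Setoid (Fin k ⊕ Fin l) × (Fin k ⊕ Fin l → G))
    -- `F` is a transversal of the equivalence classes with at most `n` parts:
    (hparts : ∀ i, numParts (F i).1 ≤ n)
    (hcover : ∀ (P : Setoid (Fin k ⊕ Fin l)) (g : Fin k ⊕ Fin l → G), numParts P ≤ n →
      ∃ i, (F i).1 = P ∧ LabelEquiv P (F i).2 g)
    (hinj : ∀ i j, (F i).1 = (F j).1 → LabelEquiv (F i).1 (F i).2 (F j).2 → i = j) :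
    -- `F(P,g)` depends only on the equivalence class of `(P, g)`
    (∀ (P : Setoid (Fin k ⊕ Fin l)) (g h : Fin k ⊕ Fin l → G),
      LabelEquiv P g h → FFun G 𝕜 n P g = FFun G 𝕜 n P h)
    -- the `F(P,g)` form a basis of `Hom_{𝕜[G_n]}(V^{⊗k}, V^{⊗l})`
    ∧ LinearIndependent 𝕜 (fun i => FFun G 𝕜 n (F i).1 (F i).2)
    ∧ Submodule.span 𝕜 (Set.range fun i => FFun G 𝕜 n (F i).1 (F i).2)
        = equivariantHom G 𝕜 n k l
    -- in particular, the maps `Φ(P,g)` span `Hom_{𝕜[G_n]}(V^{⊗k}, V^{⊗l})`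
    ∧ Submodule.span 𝕜
        {f | ∃ (P : Setoid (Fin k ⊕ Fin l)) (g : Fin k ⊕ Fin l → G), f = Phi G 𝕜 n P g}
        = equivariantHom G 𝕜 n k l :=
  FFun_basis_and_Phi_span_general 𝕜 G n k l ι F hparts hcover hinj

end GPC
end
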